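/- arXiv:0903.2489 — 5 statements merged into one kernel-verified Lean document; each statement's English description precedes it below -/
import Mathlib

section
/- Let K be a field with more than 3 elements. Then the group PSL(2,K) is simple. -/
theorem exists_ne_zero_sq_ne_one_of_three_lt_mk {K : Type*} [Ring K] [NoZeroDivisors K]
    (hK : 3 < Cardinal.mk K) : ∃ a : K, a ≠ 0 ∧ a ^ 2 ≠ 1 := by
  by_contra! h
  have hsurj : Function.Surjective fun i : ULift (Fin 3) => ![(0 : K), 1, -1] i.down := by
    intro a
    by_cases ha : a = 0
    · exact ⟨⟨0⟩, ha.symm⟩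
    · rcases sq_eq_one_iff.mp (h a ha) with rfl | rfl
      exacts [⟨⟨1⟩, rfl⟩, ⟨⟨2⟩, rfl⟩]
  exact (Cardinal.mk_le_of_surjective hsurj).not_gt (by simpa using hK)

theorem stmt2 (K : Type*) [Field K] (hK : 3 < Cardinal.mk K) :
    IsSimpleGroup (Matrix.SpecialLinearGroup (Fin 2) K ⧸
      Subgroup.center (Matrix.SpecialLinearGroup (Fin 2) K)) :=
  Matrix.ProjectiveSpecialLinearGroup.rank_two_simple' (exists_ne_zero_sq_ne_one_of_three_lt_mk hK)
end

section
/- Suppose in addition that X is irreducible and f : U → V is an isomorphism onto an open V ⊆ Z, with inverse r mapping X into itself. Let R : V_T → Z be the analogous morphism built from r. Then for every t ∈ 𝔸¹ (including t = 0), the maps f_t : U_t → Z and r_t : V_t → Z satisfy r_t ∘ f_t = id on U_t and f_t ∘ r_t = id on V_t; in particular the normal derivative f₀ is a birational transformation of Z with inverse r₀. -/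
/-- Evaluation of a function on Z = 𝔸^m × 𝔸¹ (a polynomial in the variables of X and
in the fiber variable `none`) at the point (x, y). -/
noncomputable def evalAt {k : Type*} [CommSemiring k] {m : ℕ}
    (x : Fin m → k) (y : k) (p : MvPolynomial (Option (Fin m)) k) : k :=
  MvPolynomial.eval (fun v => v.elim y x) p

/-- The family of maps f_t = s_t⁻¹ ∘ f ∘ s_t of Z = 𝔸^m × 𝔸¹, for a polynomial map
f = (f_X, y·g_Y) mapping X = 𝔸^m × {0} into itself: f_t(x,y) = (f_X(x,ty), y·g_Y(x,ty)).
At t = 1 this is f itself, and at t = 0 it is the normal derivative f₀. -/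
noncomputable def conjFamily {k : Type*} [CommSemiring k] {m : ℕ}
    (fX : Fin m → MvPolynomial (Option (Fin m)) k) (gY : MvPolynomial (Option (Fin m)) k)
    (t : k) : ((Fin m → k) × k) → ((Fin m → k) × k) :=
  fun z => (fun i => evalAt z.1 (t * z.2) (fX i), z.2 * evalAt z.1 (t * z.2) gY)

/-
For t ≠ 0 the identity f_t ∘ r_t = id is the conjugate of f ∘ r = id by the fiber scaling
s_t(x, y) = (x, t y). At t = 0 the X-component is f ∘ r = id on X, and the fiber component
asks that h_Y(x,0) · g_Y(r_X(x,0), 0) = 1. Along the fiber line through x, the fiber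
component of f ∘ r = id reads y · Q(y) = y for a polynomial Q; over an infinite field this
is the polynomial identity X · Q = X, hence Q = 1 and in particular Q(0) = 1.
-/

section Field

open Polynomial

variable {k : Type*} [Field k] {m : ℕ}

def fiberScale (t : k) (z : (Fin m → k) × k) : (Fin m → k) × k := (z.1, t * z.2)

theorem conjFamily_eq_fiberScale_conj
    (fX : Fin m → MvPolynomial (Option (Fin m)) k) (gY : MvPolynomial (Option (Fin m)) k)
    {t : k} (ht : t ≠ 0) (z : (Fin m → k) × k) :
    conjFamily fX gY t z = fiberScale t⁻¹ (conjFamily fX gY 1 (fiberScale t z)) := by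
  simp only [conjFamily, fiberScale, one_mul, Prod.mk.injEq, true_and]
  field_simp

theorem fiberScale_inv_fiberScale {t : k} (ht : t ≠ 0) (z : (Fin m → k) × k) :
    fiberScale t⁻¹ (fiberScale t z) = z := by
  simp [fiberScale, ht]

theorem fiberScale_fiberScale_inv {t : k} (ht : t ≠ 0) (z : (Fin m → k) × k) :
    fiberScale t (fiberScale t⁻¹ z) = z := by
  simp [fiberScale, ht]

theorem exists_polynomial_evalAt (a : Fin m → k[X]) (b : k[X])
    (p : MvPolynomial (Option (Fin m)) k) :
    ∃ P : k[X], ∀ y, evalAt (fun i => (a i).eval y) (b.eval y) p = P.eval y := by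
  refine ⟨MvPolynomial.aeval (fun v => v.elim b a) p, fun y => ?_⟩
  have hpt : (fun v : Option (Fin m) => aeval y (v.elim b a)) =
      fun v => v.elim (b.eval y) fun i => (a i).eval y := by
    funext v
    cases v <;> simp
  rw [← coe_aeval_eq_eval, ← AlgHom.comp_apply, MvPolynomial.comp_aeval, hpt]
  rfl

theorem eval_zero_eq_one_of_forall_mul_eval [Infinite k] {Q : k[X]}
    (hQ : ∀ y, y * Q.eval y = y) : Q.eval 0 = 1 := by
  have hXQ : X * Q = X * 1 := Polynomial.funext fun y => by simpa using hQ y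
  rw [mul_left_cancel₀ X_ne_zero hXQ, eval_one]

theorem evalAt_zero_mul_evalAt_zero_eq_one [Infinite k]
    {fX rX : Fin m → MvPolynomial (Option (Fin m)) k} {gY hY : MvPolynomial (Option (Fin m)) k}
    (hfr : Function.LeftInverse (conjFamily fX gY 1) (conjFamily rX hY 1)) (x : Fin m → k) :
    evalAt x 0 hY * evalAt (fun i => evalAt x 0 (rX i)) 0 gY = 1 := by
  have along_line : ∀ p, ∃ P : k[X], ∀ y, evalAt x y p = P.eval y := fun p => by
    simpa using exists_polynomial_evalAt (fun i => C (x i)) X p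
  obtain ⟨Ph, hPh⟩ := along_line hY
  choose Pr hPr using fun i => along_line (rX i)
  obtain ⟨Pg, hPg⟩ := exists_polynomial_evalAt Pr (X * Ph) gY
  have hQ : ∀ y, y * (Ph * Pg).eval y = y := fun y => by
    have := congrArg Prod.snd (hfr (x, y))
    simp only [conjFamily, one_mul, hPh, hPr] at this
    simpa [← hPg, mul_assoc] using this
  simpa [hPh, hPr, ← hPg] using eval_zero_eq_one_of_forall_mul_eval hQ

theorem conjFamily_leftInverse [Infinite k]
    {fX rX : Fin m → MvPolynomial (Option (Fin m)) k} {gY hY : MvPolynomial (Option (Fin m)) k}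
    (hfr : Function.LeftInverse (conjFamily fX gY 1) (conjFamily rX hY 1)) (t : k) :
    Function.LeftInverse (conjFamily fX gY t) (conjFamily rX hY t) := by
  intro z
  rcases eq_or_ne t 0 with rfl | ht
  · have on_X := congrArg Prod.fst (hfr (z.1, 0))
    simp only [conjFamily, zero_mul, mul_zero] at on_X ⊢
    rw [on_X, mul_assoc, evalAt_zero_mul_evalAt_zero_eq_one hfr]
    simp
  · simp only [conjFamily_eq_fiberScale_conj _ _ ht, fiberScale_fiberScale_inv ht, hfr _,
      fiberScale_inv_fiberScale ht]

end Field

theorem stmt12 (k : Type*) [Field k] [Infinite k] (m : ℕ)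
    (fX rX : Fin m → MvPolynomial (Option (Fin m)) k)
    (gY hY : MvPolynomial (Option (Fin m)) k)
    (hfr : ∀ z, conjFamily fX gY 1 (conjFamily rX hY 1 z) = z)
    (hrf : ∀ z, conjFamily rX hY 1 (conjFamily fX gY 1 z) = z) :
    ∀ t : k, ∀ z : (Fin m → k) × k,
      conjFamily fX gY t (conjFamily rX hY t z) = z ∧
      conjFamily rX hY t (conjFamily fX gY t z) = z :=
  fun t z => ⟨conjFamily_leftInverse hfr t z, conjFamily_leftInverse hrf t z⟩
end

section
/- Bir(P²_k) is generated by Aut(P²_k) = PGL(3,k) together with the subgroup J¹₂ ≅ PSL(2,k(x₁)) of de Jonquières transformations of determinant 1, assuming the Noether–Castelnuovo theorem that Bir(P²_k) is generated by PGL(3,k) and the standard quadratic transformation. -/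
noncomputable section

set_option synthInstance.maxHeartbeats 1000000
set_option maxHeartbeats 1000000

/- Bir(P²_k) is (anti-)isomorphic to the group of k-automorphisms of the function
field K = k(x₁,x₂); we work in Aut_k(k(x₁,x₂)). -/

variable (k : Type*) [Field k]

/-- The function field K = k(x₁,x₂) of the plane. -/
abbrev FuncField := FractionRing (MvPolynomial (Fin 2) k)

/-- The coordinate function x₁. -/
def xx1 : FuncField k := algebraMap (MvPolynomial (Fin 2) k) _ (MvPolynomial.X 0)

/-- The coordinate function x₂. -/
def xx2 : FuncField k := algebraMap (MvPolynomial (Fin 2) k) _ (MvPolynomial.X 1)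

/-- An affine-linear fractional expression (a₀ + a₁x₁ + a₂x₂). -/
def linForm (v : Fin 3 → k) : FuncField k :=
  algebraMap k _ (v 0) + algebraMap k _ (v 1) * xx1 k + algebraMap k _ (v 2) * xx2 k

/-- The subset Aut(P²_k) = PGL(3,k) of Bir(P²_k): automorphisms of k(x₁,x₂) given by
projective linear substitutions. -/
def linearSubset : Set (FuncField k ≃ₐ[k] FuncField k) :=
  {φ | ∃ a b c : Fin 3 → k,
    φ (xx1 k) = linForm k a / linForm k c ∧ φ (xx2 k) = linForm k b / linForm k c}

/-- The subfield k(x₁) ⊆ k(x₁,x₂). -/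
def baseField : IntermediateField k (FuncField k) := IntermediateField.adjoin k {xx1 k}

/-- The de Jonquières subgroup J¹₂ ≅ PSL(2,k(x₁)): maps fixing x₁ and acting on x₂ by
a Möbius transformation with coefficients in k(x₁) whose determinant is a square. -/
def deJonquieres1 : Set (FuncField k ≃ₐ[k] FuncField k) :=
  {φ | φ (xx1 k) = xx1 k ∧ ∃ a b c d : baseField k, IsSquare (a * d - b * c) ∧
    φ (xx2 k) = ((a : FuncField k) * xx2 k + (b : FuncField k)) /
      ((c : FuncField k) * xx2 k + (d : FuncField k))}

/-! ### Auxiliary constructions for the proof -/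

open MvPolynomial in
/-- Lift an automorphism of the polynomial ring to the fraction field. -/
def liftE (e : MvPolynomial (Fin 2) k ≃ₐ[k] MvPolynomial (Fin 2) k) :
    FuncField k ≃ₐ[k] FuncField k :=
  IsFractionRing.algEquivOfAlgEquiv e

/-- The swap x₁ ↔ x₂ on polynomials. -/
def polySwap : MvPolynomial (Fin 2) k ≃ₐ[k] MvPolynomial (Fin 2) k :=
  MvPolynomial.renameEquiv k (Equiv.swap 0 1)

open MvPolynomial in
/-- x₂ ↦ x₂ + 1 on polynomials. -/
def polyAdd : MvPolynomial (Fin 2) k ≃ₐ[k] MvPolynomial (Fin 2) k :=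
  AlgEquiv.ofAlgHom (aeval ![X 0, X 1 + 1]) (aeval ![X 0, X 1 - 1])
    (by apply MvPolynomial.algHom_ext; intro i; fin_cases i <;> simp)
    (by apply MvPolynomial.algHom_ext; intro i; fin_cases i <;> simp)

open MvPolynomial in
/-- x₂ ↦ x₂ - 1 on polynomials. -/
def polySub : MvPolynomial (Fin 2) k ≃ₐ[k] MvPolynomial (Fin 2) k :=
  AlgEquiv.ofAlgHom (aeval ![X 0, X 1 - 1]) (aeval ![X 0, X 1 + 1])
    (by apply MvPolynomial.algHom_ext; intro i; fin_cases i <;> simp)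
    (by apply MvPolynomial.algHom_ext; intro i; fin_cases i <;> simp)

open MvPolynomial in
/-- x₂ ↦ -x₂ on polynomials. -/
def polyNeg : MvPolynomial (Fin 2) k ≃ₐ[k] MvPolynomial (Fin 2) k :=
  AlgEquiv.ofAlgHom (aeval ![X 0, -X 1]) (aeval ![X 0, -X 1])
    (by apply MvPolynomial.algHom_ext; intro i; fin_cases i <;> simp)
    (by apply MvPolynomial.algHom_ext; intro i; fin_cases i <;> simp)

lemma liftE_algebraMap (e) (p : MvPolynomial (Fin 2) k) :
    liftE k e (algebraMap _ (FuncField k) p) = algebraMap _ _ (e p) := by simp [liftE]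

lemma swap_xx1 : liftE k (polySwap k) (xx1 k) = xx2 k := by
  rw [xx1, liftE_algebraMap]; simp [polySwap, xx2]

lemma swap_xx2 : liftE k (polySwap k) (xx2 k) = xx1 k := by
  rw [xx2, liftE_algebraMap]; simp [polySwap, xx1]

lemma add_xx1 : liftE k (polyAdd k) (xx1 k) = xx1 k := by
  rw [xx1, liftE_algebraMap]; simp [polyAdd]

open MvPolynomial in
lemma add_xx2 : liftE k (polyAdd k) (xx2 k) = xx2 k + 1 := by
  rw [xx2, liftE_algebraMap]
  have h : polyAdd k (X 1) = X 1 + 1 := by simp [polyAdd]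
  rw [h, map_add, map_one]

lemma sub_xx1 : liftE k (polySub k) (xx1 k) = xx1 k := by
  rw [xx1, liftE_algebraMap]; simp [polySub]

open MvPolynomial in
lemma sub_xx2 : liftE k (polySub k) (xx2 k) = xx2 k - 1 := by
  rw [xx2, liftE_algebraMap]
  have h : polySub k (X 1) = X 1 - 1 := by simp [polySub]
  rw [h, map_sub, map_one]

lemma neg_xx1 : liftE k (polyNeg k) (xx1 k) = xx1 k := by
  rw [xx1, liftE_algebraMap]; simp [polyNeg]

open MvPolynomial in
lemma neg_xx2 : liftE k (polyNeg k) (xx2 k) = -xx2 k := by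
  rw [xx2, liftE_algebraMap]
  have h : polyNeg k (X 1) = -X 1 := by simp [polyNeg]
  rw [h, map_neg]

lemma xx2_ne_zero : xx2 k ≠ 0 := by
  rw [xx2, Ne, IsFractionRing.to_map_eq_zero_iff]
  exact MvPolynomial.X_ne_zero 1

open MvPolynomial in
lemma neg_xx2_add_one_ne_zero : -xx2 k + 1 ≠ 0 := by
  have h : -xx2 k + 1 = algebraMap (MvPolynomial (Fin 2) k) (FuncField k) (-X 1 + 1) := by
    rw [map_add, map_neg, map_one, xx2]
  rw [h, Ne, IsFractionRing.to_map_eq_zero_iff]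
  intro hc
  have := congrArg MvPolynomial.constantCoeff hc
  simp at this

/-- Two automorphisms of the function field agreeing on x₁ and x₂ are equal. -/
theorem FF_ext {φ ψ : FuncField k ≃ₐ[k] FuncField k}
    (h1 : φ (xx1 k) = ψ (xx1 k)) (h2 : φ (xx2 k) = ψ (xx2 k)) : φ = ψ := by
  have h : (φ : FuncField k →+* FuncField k) = ψ := by
    apply IsLocalization.ringHom_ext (nonZeroDivisors (MvPolynomial (Fin 2) k))
    apply MvPolynomial.ringHom_ext
    · intro r
      simp only [RingHom.comp_apply, RingHom.coe_coe, ← MvPolynomial.algebraMap_eq,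
        ← IsScalarTower.algebraMap_apply, AlgEquiv.commutes]
    · intro i
      fin_cases i
      · exact h1
      · exact h2
  ext x
  exact RingHom.congr_fun h x

lemma swap_mem_linear : liftE k (polySwap k) ∈ linearSubset k := by
  refine ⟨![0, 0, 1], ![0, 1, 0], ![1, 0, 0], ?_, ?_⟩
  · rw [swap_xx1]
    simp [linForm]
  · rw [swap_xx2]
    simp [linForm]

lemma isSquare_neg_one [IsAlgClosed k] : IsSquare (-1 : baseField k) := by
  obtain ⟨i, hi⟩ : ∃ z : k, z ^ 2 = -1 := IsAlgClosed.exists_pow_nat_eq (-1 : k) zero_lt_two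
  refine ⟨algebraMap k (baseField k) i, ?_⟩
  rw [← map_mul, ← pow_two, hi, map_neg, map_one]

theorem stmt15 [IsAlgClosed k]
    (σ : FuncField k ≃ₐ[k] FuncField k)
    (hσ1 : σ (xx1 k) = (xx1 k)⁻¹) (hσ2 : σ (xx2 k) = (xx2 k)⁻¹)
    (hNC : Subgroup.closure (linearSubset k ∪ {σ}) = ⊤) :
    Subgroup.closure (linearSubset k ∪ deJonquieres1 k) = ⊤ := by
  set s := liftE k (polySwap k) with hs_def
  set a := liftE k (polyAdd k) with ha_def
  set a' := liftE k (polySub k) with ha'_def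
  set d := liftE k (polyNeg k) with hd_def
  set u : FuncField k ≃ₐ[k] FuncField k := d * a * σ * a' * σ * a with hu_def
  have hu1 : u (xx1 k) = xx1 k := by
    simp only [hu_def, hd_def, ha_def, ha'_def, AlgEquiv.mul_apply]
    rw [add_xx1, hσ1, map_inv₀, sub_xx1, map_inv₀, hσ1, inv_inv, add_xx1, neg_xx1]
  have hu2 : u (xx2 k) = (xx2 k)⁻¹ := by
    simp only [hu_def, hd_def, ha_def, ha'_def, AlgEquiv.mul_apply]
    simp only [map_add, map_sub, map_inv₀, map_one, add_xx2, sub_xx2, neg_xx2, hσ2]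
    -- goal : ((((-xx2 + 1)⁻¹ - 1)⁻¹ + 1 = xx2⁻¹  (roughly)
    have h2 : xx2 k ≠ 0 := xx2_ne_zero k
    have h3 : -xx2 k + 1 ≠ 0 := neg_xx2_add_one_ne_zero k
    have h4 : (-xx2 k + 1)⁻¹ - 1 = xx2 k / (-xx2 k + 1) := by
      field_simp
      ring
    rw [h4, inv_div]
    field_simp
    ring
  have huJ : u ∈ deJonquieres1 k := by
    refine ⟨hu1, 0, 1, 1, 0, ?_, ?_⟩
    · have : (0 : baseField k) * 0 - 1 * 1 = -1 := by ring
      rw [this]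
      exact isSquare_neg_one k
    · rw [hu2]
      push_cast
      rw [zero_mul, zero_add, one_mul, add_zero, inv_eq_one_div]
  have hkey : σ = s * u * s * u := by
    apply FF_ext
    · simp only [AlgEquiv.mul_apply]
      rw [hu1, hs_def, swap_xx1, hu2, map_inv₀]
      rw [show s (xx2 k) = xx1 k from swap_xx2 k, hσ1]
    · simp only [AlgEquiv.mul_apply]
      rw [hu2, hs_def, map_inv₀]
      rw [show s (xx2 k) = xx1 k from swap_xx2 k, map_inv₀, hu1, map_inv₀,
        show s (xx1 k) = xx2 k from swap_xx1 k, hσ2]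
  rw [eq_top_iff, ← hNC, Subgroup.closure_le]
  rintro φ (hφ | hφ)
  · exact Subgroup.subset_closure (Or.inl hφ)
  · rw [Set.mem_singleton_iff] at hφ
    subst hφ
    have hs : s ∈ Subgroup.closure (linearSubset k ∪ deJonquieres1 k) :=
      Subgroup.subset_closure (Or.inl (swap_mem_linear k))
    have hu : u ∈ Subgroup.closure (linearSubset k ∪ deJonquieres1 k) :=
      Subgroup.subset_closure (Or.inr huJ)
    show φ ∈ Subgroup.closure (linearSubset k ∪ deJonquieres1 k)
    rw [hkey]
    exact mul_mem (mul_mem (mul_mem hs hu) hs) hu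

end
end

section
/- Every element of PGL(n+1,k) (k infinite field) is joinable to the identity by a morphism 𝔸¹ → PGL(n+1,k): PGL(n+1,k) is generated by upper-triangular unipotent elements and diagonal elements together with their conjugates, and each of these lies on an algebraic path through the identity (replace the off-diagonal entries a_{i,j} by t·a_{i,j}, resp. diagonal entries a_i by (a_i−1)t+1). -/
open Polynomial Matrix

namespace Stmt17Aux

variable {k : Type*} [Field k] {m : Type*} [Fintype m] [DecidableEq m]

noncomputable def uOf (A : Matrix m m k) (h : A.det ≠ 0) : GL m k :=
  ((Matrix.isUnit_iff_isUnit_det A).mpr (isUnit_iff_ne_zero.mpr h)).unit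

@[simp] lemma uOf_val (A : Matrix m m k) (h : A.det ≠ 0) :
    ((uOf A h : GL m k) : Matrix m m k) = A := IsUnit.unit_spec _

lemma uOf_eq_of_val {A : Matrix m m k} (h : A.det ≠ 0) (u : GL m k)
    (hu : (u : Matrix m m k) = A) : uOf A h = u :=
  Units.ext (by simp [hu])

/-- The evaluation of a polynomial matrix at `t`. -/
noncomputable def ev (t : k) : Matrix m m k[X] →+* Matrix m m k :=
  (evalRingHom t).mapMatrix

lemma ev_adjugate (t : k) (M : Matrix m m k[X]) :
    ev t M.adjugate = (ev t M).adjugate := (evalRingHom t).map_adjugate M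

lemma ev_det (t : k) (M : Matrix m m k[X]) : (ev t M).det = eval t M.det :=
  ((evalRingHom t).map_det M).symm

/-- `J x`: `x` is joinable to the identity by a polynomial path. -/
def J (x : GL m k ⧸ Subgroup.center (GL m k)) : Prop :=
  ∃ M : Matrix m m k[X], ∃ h0 : (ev (0:k) M).det ≠ 0, ∃ h1 : (ev (1:k) M).det ≠ 0,
    (QuotientGroup.mk (uOf _ h0) : GL m k ⧸ Subgroup.center (GL m k)) = 1 ∧
    (QuotientGroup.mk (uOf _ h1) : GL m k ⧸ Subgroup.center (GL m k)) = x

lemma J_one : J (1 : GL m k ⧸ Subgroup.center (GL m k)) := by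
  refine ⟨1, by simp, by simp, ?_, ?_⟩ <;>
  · rw [uOf_eq_of_val _ 1 (by simp)]; simp

lemma J_mul {x y : GL m k ⧸ Subgroup.center (GL m k)} (hx : J x) (hy : J y) : J (x * y) := by
  obtain ⟨M, hM0, hM1, hM0e, hM1e⟩ := hx
  obtain ⟨N, hN0, hN1, hN0e, hN1e⟩ := hy
  have h0 : (ev (0:k) (M * N)).det ≠ 0 := by
    rw [_root_.map_mul (ev _), det_mul]; exact mul_ne_zero hM0 hN0
  have h1 : (ev (1:k) (M * N)).det ≠ 0 := by
    rw [_root_.map_mul (ev _), det_mul]; exact mul_ne_zero hM1 hN1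
  refine ⟨M * N, h0, h1, ?_, ?_⟩
  · rw [uOf_eq_of_val h0 (uOf _ hM0 * uOf _ hN0) (by simp [_root_.map_mul (ev _)])]
    rw [QuotientGroup.mk_mul, hM0e, hN0e, one_mul]
  · rw [uOf_eq_of_val h1 (uOf _ hM1 * uOf _ hN1) (by simp [_root_.map_mul (ev _)])]
    rw [QuotientGroup.mk_mul, hM1e, hN1e]

lemma scalar_mem_center (c : k) (u : GL m k) (hu : (u : Matrix m m k) = c • 1) :
    u ∈ Subgroup.center (GL m k) := by
  rw [Subgroup.mem_center_iff]
  intro g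
  apply Units.ext
  show (g : Matrix m m k) * u = (u : Matrix m m k) * g
  rw [hu, smul_mul_assoc, mul_smul_comm, one_mul, mul_one]

lemma J_inv {x : GL m k ⧸ Subgroup.center (GL m k)} (hx : J x) : J x⁻¹ := by
  obtain ⟨M, hM0, hM1, hM0e, hM1e⟩ := hx
  have key : ∀ t : k, (ev t M).det ≠ 0 → (ev t M.adjugate).det ≠ 0 := by
    intro t ht
    rw [ev_adjugate, det_adjugate]
    exact pow_ne_zero _ ht
  have h0 := key 0 hM0
  have h1 := key 1 hM1
  have main : ∀ (t : k) (ht : (ev t M).det ≠ 0) (ht' : (ev t M.adjugate).det ≠ 0),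
      (QuotientGroup.mk (uOf _ ht') : GL m k ⧸ Subgroup.center (GL m k)) =
        (QuotientGroup.mk (uOf _ ht))⁻¹ := by
    intro t ht ht'
    have hc : uOf _ ht' * uOf _ ht ∈ Subgroup.center (GL m k) := by
      apply scalar_mem_center ((ev t M).det)
      show (uOf _ ht' : Matrix m m k) * (uOf _ ht : Matrix m m k) = _
      rw [uOf_val, uOf_val, ev_adjugate, adjugate_mul]
    have : (QuotientGroup.mk (uOf _ ht') : GL m k ⧸ Subgroup.center (GL m k)) *
        QuotientGroup.mk (uOf _ ht) = 1 := by
      rw [← QuotientGroup.mk_mul, QuotientGroup.eq_one_iff]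
      exact hc
    exact eq_inv_of_mul_eq_one_left this
  exact ⟨M.adjugate, h0, h1, by rw [main 0 hM0 h0, hM0e, inv_one],
    by rw [main 1 hM1 h1, hM1e]⟩


noncomputable def cmap : Matrix m m k →+* Matrix m m k[X] := (C : k →+* k[X]).mapMatrix

lemma ev_cmap (t : k) (A : Matrix m m k) : ev t (cmap A) = A := by
  ext i j
  simp [ev, cmap, RingHom.mapMatrix_apply, Matrix.map_apply]

lemma J_conj (g H : GL m k) (P : Matrix m m k[X])
    (hP0 : ev (0:k) P = 1) (hP1 : ev (1:k) P = (g : Matrix m m k)) :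
    J ((QuotientGroup.mk H : GL m k ⧸ Subgroup.center (GL m k)) * QuotientGroup.mk g *
      (QuotientGroup.mk H)⁻¹) := by
  set M := cmap (H : Matrix m m k) * P * cmap ((H⁻¹ : GL m k) : Matrix m m k) with hM
  have hev : ∀ t : k, ev t M =
      (H : Matrix m m k) * ev t P * ((H⁻¹ : GL m k) : Matrix m m k) := by
    intro t
    rw [hM, _root_.map_mul (ev t), _root_.map_mul (ev t), ev_cmap, ev_cmap]
  have hval0 : ev (0:k) M = ((1 : GL m k) : Matrix m m k) := by
    rw [hev, hP0, mul_one, ← Units.val_mul, mul_inv_cancel]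
  have hval1 : ev (1:k) M = ((H * g * H⁻¹ : GL m k) : Matrix m m k) := by
    rw [hev, hP1, Units.val_mul, Units.val_mul]
  have h0 : (ev (0:k) M).det ≠ 0 := by
    rw [hval0]
    exact ((Matrix.isUnit_iff_isUnit_det _).mp (1 : GL m k).isUnit).ne_zero
  have h1 : (ev (1:k) M).det ≠ 0 := by
    rw [hval1]
    exact ((Matrix.isUnit_iff_isUnit_det _).mp (H * g * H⁻¹ : GL m k).isUnit).ne_zero
  refine ⟨M, h0, h1, ?_, ?_⟩
  · rw [uOf_eq_of_val h0 1 hval0.symm]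
    exact QuotientGroup.mk_one _
  · rw [uOf_eq_of_val h1 (H * g * H⁻¹) hval1.symm]
    simp [QuotientGroup.mk_mul, QuotientGroup.mk_inv]

lemma J_of_diag_one (g H : GL m k) (hdiag : ∀ i, (g : Matrix m m k) i i = 1) :
    J ((QuotientGroup.mk H : GL m k ⧸ Subgroup.center (GL m k)) * QuotientGroup.mk g *
      (QuotientGroup.mk H)⁻¹) := by
  apply J_conj g H (Matrix.of fun i j => if i = j then 1 else C ((g : Matrix m m k) i j) * X)
  · ext i j
    by_cases h : i = j <;>
      simp [ev, RingHom.mapMatrix_apply, Matrix.map_apply, Matrix.one_apply, h]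
  · ext i j
    by_cases h : i = j
    · subst h
      simp [ev, RingHom.mapMatrix_apply, Matrix.map_apply, hdiag i]
    · simp [ev, RingHom.mapMatrix_apply, Matrix.map_apply, h]

lemma J_of_diagonal (g H : GL m k) (d : m → k) (hd : (g : Matrix m m k) = Matrix.diagonal d) :
    J ((QuotientGroup.mk H : GL m k ⧸ Subgroup.center (GL m k)) * QuotientGroup.mk g *
      (QuotientGroup.mk H)⁻¹) := by
  apply J_conj g H (Matrix.diagonal fun i => (C (d i) - 1) * X + 1)
  · ext i j
    by_cases h : i = j <;>
      simp [ev, RingHom.mapMatrix_apply, Matrix.map_apply, Matrix.one_apply,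
        Matrix.diagonal_apply, h]
  · ext i j
    by_cases h : i = j <;>
      simp [ev, RingHom.mapMatrix_apply, Matrix.map_apply, hd,
        Matrix.diagonal_apply, h]

lemma exists_conj_transvection {i j : m} (hij : i ≠ j) (c : k) (u : GL m k)
    (hu : (u : Matrix m m k) = Matrix.transvection i j c) :
    ∃ w g' : GL m k, (g' : Matrix m m k) = Matrix.transvection j i c ∧ u = w * g' * w⁻¹ := by
  have hPP : ((Equiv.swap i j).toPEquiv.toMatrix : Matrix m m k) *
      (Equiv.swap i j).toPEquiv.toMatrix = 1 := by
    rw [← PEquiv.toMatrix_trans, ← Equiv.toPEquiv_trans, Equiv.swap_swap,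
      Equiv.toPEquiv_refl, PEquiv.toMatrix_refl]
  refine ⟨⟨(Equiv.swap i j).toPEquiv.toMatrix, (Equiv.swap i j).toPEquiv.toMatrix, hPP, hPP⟩,
    ⟨Matrix.transvection j i c, Matrix.transvection j i (-c), ?_, ?_⟩, rfl, ?_⟩
  · rw [Matrix.transvection_mul_transvection_same _ _ hij.symm, add_neg_cancel,
      Matrix.transvection_zero]
  · rw [Matrix.transvection_mul_transvection_same _ _ hij.symm, neg_add_cancel,
      Matrix.transvection_zero]
  · apply Units.ext
    show (u : Matrix m m k) =
      (Equiv.swap i j).toPEquiv.toMatrix * Matrix.transvection j i c *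
        (Equiv.swap i j).toPEquiv.toMatrix
    rw [hu, Matrix.mul_assoc, PEquiv.mul_toMatrix_toPEquiv, PEquiv.toMatrix_toPEquiv_mul]
    ext a b
    have hs : ∀ x y : m, (x = Equiv.swap i j y) ↔ (Equiv.swap i j x = y) := by
      intro x y
      constructor
      · intro h; rw [h, Equiv.swap_apply_self]
      · intro h; rw [← h, Equiv.swap_apply_self]
    have h1 : (j = Equiv.swap i j a) ↔ (i = a) := by rw [hs, Equiv.swap_apply_right]
    have h2 : (i = Equiv.swap i j b) ↔ (j = b) := by rw [hs, Equiv.swap_apply_left]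
    simp only [Matrix.submatrix_apply, id_eq, Equiv.symm_swap,
      Matrix.transvection, Matrix.add_apply, Matrix.one_apply,
      Matrix.single, Matrix.of_apply, EmbeddingLike.apply_eq_iff_eq]
    simp only [h1, h2]

end Stmt17Aux


/- STATEMENT 17 -/
theorem stmt17 (k : Type*) [Field k] [Infinite k] (n : ℕ) :
    Subgroup.closure {x : GL (Fin (n + 1)) k ⧸ Subgroup.center (GL (Fin (n + 1)) k) |
      ∃ g : GL (Fin (n + 1)) k,
        ((∀ i j : Fin (n + 1), j < i → (g : Matrix (Fin (n + 1)) (Fin (n + 1)) k) i j = 0) ∧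
          (∀ i : Fin (n + 1), (g : Matrix (Fin (n + 1)) (Fin (n + 1)) k) i i = 1) ∨
         ∃ d : Fin (n + 1) → k, (g : Matrix (Fin (n + 1)) (Fin (n + 1)) k) = Matrix.diagonal d) ∧
        ∃ h, x = h * QuotientGroup.mk g * h⁻¹} = ⊤ ∧
    ∀ x : GL (Fin (n + 1)) k ⧸ Subgroup.center (GL (Fin (n + 1)) k),
      ∃ (N : k → GL (Fin (n + 1)) k) (U : Set k),
        Uᶜ.Finite ∧ (0 : k) ∈ U ∧ (1 : k) ∈ U ∧
        (∀ i j : Fin (n + 1), ∃ p q : Polynomial k, ∀ t ∈ U,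
          (N t : Matrix (Fin (n + 1)) (Fin (n + 1)) k) i j =
            Polynomial.eval t p / Polynomial.eval t q) ∧
        (QuotientGroup.mk (N 0) : GL (Fin (n + 1)) k ⧸ Subgroup.center (GL (Fin (n + 1)) k)) = 1 ∧
        (QuotientGroup.mk (N 1) : GL (Fin (n + 1)) k ⧸ Subgroup.center (GL (Fin (n + 1)) k)) = x := by
  classical
  set S : Set (GL (Fin (n + 1)) k ⧸ Subgroup.center (GL (Fin (n + 1)) k)) :=
    {x : GL (Fin (n + 1)) k ⧸ Subgroup.center (GL (Fin (n + 1)) k) |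
      ∃ g : GL (Fin (n + 1)) k,
        ((∀ i j : Fin (n + 1), j < i → (g : Matrix (Fin (n + 1)) (Fin (n + 1)) k) i j = 0) ∧
          (∀ i : Fin (n + 1), (g : Matrix (Fin (n + 1)) (Fin (n + 1)) k) i i = 1) ∨
         ∃ d : Fin (n + 1) → k, (g : Matrix (Fin (n + 1)) (Fin (n + 1)) k) = Matrix.diagonal d) ∧
        ∃ h, x = h * QuotientGroup.mk g * h⁻¹} with hS
  have part1 : Subgroup.closure S = ⊤ := by
    rw [eq_top_iff]
    rintro x -
    refine QuotientGroup.induction_on x ?_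
    intro g0
    have main := Matrix.diagonal_transvection_induction
      (fun A => ∀ u : GL (Fin (n + 1)) k, (u : Matrix (Fin (n + 1)) (Fin (n + 1)) k) = A →
        (QuotientGroup.mk u : GL (Fin (n + 1)) k ⧸ Subgroup.center (GL (Fin (n + 1)) k)) ∈
          Subgroup.closure S)
      ((g0 : Matrix (Fin (n + 1)) (Fin (n + 1)) k)) ?_ ?_ ?_
    · exact main g0 rfl
    · intro D _ u hu
      apply Subgroup.subset_closure
      exact ⟨u, Or.inr ⟨D, hu⟩, 1, by simp⟩
    · rintro ⟨i, j, hij, c⟩ u hu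
      rw [Matrix.TransvectionStruct.toMatrix_mk] at hu
      rcases lt_or_gt_of_ne hij with hlt | hgt
      · apply Subgroup.subset_closure
        refine ⟨u, Or.inl ⟨?_, ?_⟩, 1, by simp⟩
        · intro a b hba
          have hne : a ≠ b := hba.ne'
          have hc : ¬(i = a ∧ j = b) := by
            rintro ⟨rfl, rfl⟩
            exact absurd hlt (not_lt.mpr hba.le)
          rw [hu]
          simp [Matrix.transvection, Matrix.add_apply, Matrix.one_apply, hne,
            Matrix.single_apply_of_ne _ _ _ _ _ hc]
        · intro a
          have hc : ¬(i = a ∧ j = a) := by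
            rintro ⟨rfl, rfl⟩
            exact hij rfl
          rw [hu]
          simp [Matrix.transvection, Matrix.add_apply, Matrix.one_apply,
            Matrix.single_apply_of_ne _ _ _ _ _ hc]
      · obtain ⟨w, g', hg'val, rfl⟩ := Stmt17Aux.exists_conj_transvection hij c u hu
        apply Subgroup.subset_closure
        refine ⟨g', Or.inl ⟨?_, ?_⟩, QuotientGroup.mk w, by
          simp [QuotientGroup.mk_mul, QuotientGroup.mk_inv]⟩
        · intro a b hba
          have hne : a ≠ b := hba.ne'
          have hc : ¬(j = a ∧ i = b) := by
            rintro ⟨rfl, rfl⟩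
            exact absurd hgt (not_lt.mpr hba.le)
          rw [hg'val]
          simp [Matrix.transvection, Matrix.add_apply, Matrix.one_apply, hne,
            Matrix.single_apply_of_ne _ _ _ _ _ hc]
        · intro a
          have hc : ¬(j = a ∧ i = a) := by
            rintro ⟨rfl, rfl⟩
            exact hij rfl
          rw [hg'val]
          simp [Matrix.transvection, Matrix.add_apply, Matrix.one_apply,
            Matrix.single_apply_of_ne _ _ _ _ _ hc]
    · intro A B hA hB u hu
      have hdet : IsUnit ((A * B).det) := by
        rw [← hu]
        exact (Matrix.isUnit_iff_isUnit_det _).mp u.isUnit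
      rw [Matrix.det_mul] at hdet
      have hA' : IsUnit A := (Matrix.isUnit_iff_isUnit_det A).mpr
        (isUnit_of_mul_isUnit_left hdet)
      have hB' : IsUnit B := (Matrix.isUnit_iff_isUnit_det B).mpr
        (isUnit_of_mul_isUnit_left (mul_comm A.det B.det ▸ hdet))
      have hu' : u = hA'.unit * hB'.unit := Units.ext (by simp [hu])
      rw [hu', QuotientGroup.mk_mul]
      exact mul_mem (hA hA'.unit hA'.unit_spec) (hB hB'.unit hB'.unit_spec)
  refine ⟨part1, ?_⟩
  intro x
  have hx : x ∈ Subgroup.closure S := part1 ▸ Subgroup.mem_top x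
  have hJ : Stmt17Aux.J x := by
    refine Subgroup.closure_induction ?_ ?_ ?_ ?_ hx
    · rintro y ⟨g, hg, h, rfl⟩
      obtain ⟨H, rfl⟩ := QuotientGroup.mk_surjective h
      rcases hg with ⟨-, hdiag⟩ | ⟨d, hd⟩
      · exact Stmt17Aux.J_of_diag_one g H hdiag
      · exact Stmt17Aux.J_of_diagonal g H d hd
    · exact Stmt17Aux.J_one
    · intro a b _ _ ha hb
      exact Stmt17Aux.J_mul ha hb
    · intro a _ ha
      exact Stmt17Aux.J_inv ha
  obtain ⟨M, h0, h1, e0, e1⟩ := hJ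
  refine ⟨fun t => if h : (Stmt17Aux.ev t M).det ≠ 0 then Stmt17Aux.uOf _ h else 1,
    {t | (Stmt17Aux.ev t M).det ≠ 0}, ?_, h0, h1, ?_, ?_, ?_⟩
  · have hMdet : M.det ≠ 0 := by
      intro hcon
      apply h0
      rw [Stmt17Aux.ev_det, hcon, Polynomial.eval_zero]
    apply Set.Finite.subset (Polynomial.finite_setOf_isRoot hMdet)
    intro t ht
    simp only [Set.mem_compl_iff, Set.mem_setOf_eq, not_not] at ht
    show Polynomial.eval t M.det = 0
    rw [← Stmt17Aux.ev_det]
    exact ht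
  · intro i j
    refine ⟨M i j, 1, ?_⟩
    intro t ht
    have ht' : (Stmt17Aux.ev t M).det ≠ 0 := ht
    simp only [dif_pos ht', Stmt17Aux.uOf_val]
    simp [Stmt17Aux.ev, RingHom.mapMatrix_apply, Matrix.map_apply]
  · simp only [dif_pos h0]
    exact e0
  · simp only [dif_pos h1]
    exact e1
end

section
/- For k algebraically closed and n ≥ 1, PGL(n+1,k) is a simple group. -/
/-! Iwasawa's criterion. `PSL(ι, F)` acts faithfully and 2-transitively, hence primitively, on
`ℙ(F^ι)`; the transvections with a given centre form an abelian subgroup, these subgroups are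
permuted by conjugation, and all transvections generate `SL`. The group is perfect because
`⁅diag(a, a⁻¹), t(b)⁆ = t((a² - 1) b)`, so for `a² ≠ 1` every transvection is a commutator.
Over an algebraically closed field every determinant is an `|ι|`-th power, so `PGL ≅ PSL`. -/

open Matrix MatrixGroups

namespace Matrix.SpecialLinearGroup

variable {ι F : Type*} [Fintype ι] [DecidableEq ι] [Field F]

lemma diag2n_mul_transvection {i j : ι} (hij : i ≠ j) {a : F} (ha : a ≠ 0) (b : F) :
    diag2n hij a ha * transvection hij b = transvection hij (a ^ 2 * b) * diag2n hij a ha := by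
  ext x y
  simp only [coe_mul, diag2n_coe, transvection_coe, mul_add, add_mul, diagonal_mul, mul_diagonal,
    Matrix.add_apply, single_apply, one_apply]
  grind

/-- `diag(a, a⁻¹) = w(a) w(-1)` with the Weyl element `w(a) = t_ij(a) t_ji(-a⁻¹) t_ij(a)`. -/
lemma diag2n_eq_prod_transvection {i j : ι} (hij : i ≠ j) {a : F} (ha : a ≠ 0) :
    diag2n hij a ha = transvection hij a * transvection hij.symm (-a⁻¹) * transvection hij a *
      transvection hij (-1) * transvection hij.symm 1 * transvection hij (-1) := by
  ext x y
  simp only [coe_mul, diag2n_coe, transvection_coe, mul_add, add_mul, mul_one, one_mul,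
    single_mul_single_same, single_mul_single_of_ne _ _ _ _ hij,
    single_mul_single_of_ne _ _ _ _ hij.symm, add_zero]
  simp only [Matrix.add_apply, single_apply, diagonal_apply, one_apply]
  grind

theorem transvection_induction [Nontrivial ι] (P : SpecialLinearGroup ι F → Prop)
    (htransvec : ∀ (i j : ι) (hij : i ≠ j) (c : F), P (transvection hij c))
    (hmul : ∀ A B, P A → P B → P (A * B)) (A : SpecialLinearGroup ι F) : P A := by
  refine diagonal_transvection_induction' P A (fun i j hij c hc ↦ ?_) htransvec hmul
  rw [diag2n_eq_prod_transvection hij hc]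
  repeat' apply hmul
  all_goals apply htransvec

open scoped commutatorElement in
lemma commutator_diag2n_transvection {i j : ι} (hij : i ≠ j) {a : F} (ha : a ≠ 0) (b : F) :
    ⁅diag2n hij a ha, transvection hij b⁆ = transvection hij ((a ^ 2 - 1) * b) := by
  rw [commutatorElement_def, diag2n_mul_transvection, mul_inv_cancel_right, transvection_inv,
    ← transvection_add, sub_one_mul, sub_eq_add_neg]

lemma transvection_mem_commutator_of_sq_ne_one {a : F} (ha : a ≠ 0) (hasq : a ^ 2 ≠ 1)
    {i j : ι} (hij : i ≠ j) (c : F) : transvection hij c ∈ commutator (SpecialLinearGroup ι F) := by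
  rw [← mul_div_cancel₀ c (sub_ne_zero_of_ne hasq), ← commutator_diag2n_transvection hij ha]
  exact Subgroup.commutator_mem_commutator (Subgroup.mem_top _) (Subgroup.mem_top _)

theorem commutator_eq_top [Nontrivial ι] {a : F} (ha : a ≠ 0) (hasq : a ^ 2 ≠ 1) :
    commutator (SpecialLinearGroup ι F) = ⊤ :=
  eq_top_iff.2 fun A _ ↦ transvection_induction (· ∈ commutator _)
    (fun _ _ hij ↦ transvection_mem_commutator_of_sq_ne_one ha hasq hij) (fun _ _ ↦ mul_mem) A

open scoped LinearAlgebra.Projectivization in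
theorem iSup_lineStab_eq_top [Nontrivial ι] :
    ⨆ p : ℙ F (ι → F), lineStab p.submodule = (⊤ : Subgroup (SpecialLinearGroup ι F)) := by
  refine eq_top_iff.2 fun A _ ↦ transvection_induction
    (· ∈ ⨆ p : ℙ F (ι → F), lineStab p.submodule) (fun i j hij c ↦ ?_) (fun _ _ ↦ mul_mem) A
  have hi : (Pi.single i 1 : ι → F) ≠ 0 := Pi.single_ne_zero_iff.2 one_ne_zero
  refine Subgroup.mem_iSup_of_mem (Projectivization.mk F _ hi) ?_
  rw [Projectivization.submodule_mk]
  exact SL2Gen.transvection_mem_lineStab hij c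

end Matrix.SpecialLinearGroup

namespace Matrix.ProjectiveSpecialLinearGroup

open scoped LinearAlgebra.Projectivization

variable {ι F : Type*} [Fintype ι] [DecidableEq ι] [Field F]

noncomputable def iwasawaStructure [Nontrivial ι] :
    MulAction.IwasawaStructure (ProjectiveSpecialLinearGroup ι F) (ℙ F (ι → F)) where
  T := PSL.iwasawaT
  is_comm p := by
    have : IsMulCommutative (SpecialLinearGroup.lineStab (ι := ι) p.submodule) := by
      rw [← Projectivization.mk_rep p, Projectivization.submodule_mk]
      exact SpecialLinearGroup.lineStab_isMulCommutative_of_span p.rep p.rep_nonzero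
    exact Subgroup.map_isMulCommutative _ _
  is_conj g p := by
    obtain ⟨g, rfl⟩ := QuotientGroup.mk_surjective g
    rw [smul_proj_mk]
    exact (congrArg (Subgroup.map _) (by rw [PSL.smul_submodule,
      SpecialLinearGroup.lineStab_smul])).trans (PSL.iwasawaT_map_conj g _)
  is_generator := by
    rw [eq_top_iff, ← Subgroup.map_top_of_surjective _ (QuotientGroup.mk'_surjective _),
      ← SpecialLinearGroup.iSup_lineStab_eq_top, Subgroup.map_iSup]

theorem isSimpleGroup [Nontrivial ι] (hF : ∃ a : F, a ≠ 0 ∧ a ^ 2 ≠ 1) :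
    IsSimpleGroup (ProjectiveSpecialLinearGroup ι F) := by
  obtain ⟨a, ha, hasq⟩ := hF
  have : Group.IsPerfect (SpecialLinearGroup ι F) :=
    ⟨SpecialLinearGroup.commutator_eq_top ha hasq⟩
  exact MulAction.IwasawaStructure.isSimpleGroup Group.IsPerfect.commutator_eq_top
    iwasawaStructure inferInstance

end Matrix.ProjectiveSpecialLinearGroup

lemma Infinite.exists_ne_zero_sq_ne_one (R : Type*) [Ring R] [NoZeroDivisors R] [Infinite R] :
    ∃ a : R, a ≠ 0 ∧ a ^ 2 ≠ 1 := by
  classical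
  obtain ⟨a, ha⟩ := Infinite.exists_notMem_finset ({0, 1, -1} : Finset R)
  simp only [Finset.mem_insert, Finset.mem_singleton, not_or] at ha
  exact ⟨a, ha.1, by rw [Ne, sq_eq_one_iff]; tauto⟩

theorem stmt19 (k : Type*) [Field k] [IsAlgClosed k] (n : ℕ) (hn : 1 ≤ n) :
    IsSimpleGroup (GL (Fin (n + 1)) k ⧸ Subgroup.center (GL (Fin (n + 1)) k)) := by
  have : Nontrivial (Fin (n + 1)) := Fin.nontrivial_iff_two_le.2 (by omega)
  have := ProjectiveSpecialLinearGroup.isSimpleGroup (ι := Fin (n + 1))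
    (Infinite.exists_ne_zero_sq_ne_one k)
  exact ProjectiveSpecialLinearGroup.isoPSLOfAlgClosed.isSimpleGroup
end
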